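/- Let n ≥ 3, let a, b ≥ 1 be natural numbers, and set m = (a+1)(b+1) - 1 = ab + a + b. Let L_n(a,b) be the n×n matrix whose upper-left 3×3 block is L_3(a,b) = [[ab+b-1, a, 1], [a, ab, b], [1, b, ab+a-1]], whose remaining diagonal entries (positions (4,4) through (n,n)) all equal m, and whose other entries are 0. Then C_{L_n(a,b)} = (-1)^{a+b+1} · m!/((ab-1)!·0!·0!·a!·b!·1!) + (-1)^{a+b} · m!/((ab)!·1!·1!·(a-1)!·(b-1)!·0!). -/

import Mathlib

/-- The coefficient `C_L` of the monomial `x^L = ∏ x_{ij}^{l_{ij}}` in `(det X)^m`,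
where `X` is the `n × n` matrix of indeterminates `x_{ij}`. -/
noncomputable def coeffC (n m : ℕ) (L : Matrix (Fin n) (Fin n) ℕ) : ℤ :=
  MvPolynomial.coeff
    (Finsupp.equivFunOnFinite.symm fun p : Fin n × Fin n => L p.1 p.2)
    ((Matrix.det (Matrix.of fun i j : Fin n =>
      (MvPolynomial.X (i, j) : MvPolynomial (Fin n × Fin n) ℤ))) ^ m)

/-- The 3×3 matrix `L_3(a,b)`. -/
def L3 (a b : ℕ) : Matrix (Fin 3) (Fin 3) ℕ :=
  !![a * b + b - 1, a, 1;
     a, a * b, b;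
     1, b, a * b + a - 1]

/-- The n×n matrix `L_n(a,b)`: upper-left 3×3 block `L_3(a,b)`, remaining diagonal
entries equal to `m = ab + a + b`, and all other entries `0`. -/
def Lmat (n a b : ℕ) : Matrix (Fin n) (Fin n) ℕ := fun i j =>
  if h : (i : ℕ) < 3 ∧ (j : ℕ) < 3 then L3 a b ⟨i, h.1⟩ ⟨j, h.2⟩
  else if i = j then a * b + a + b else 0

/-! Expanding `det X = ∑_σ sign σ · ∏_j x_{σ j, j}` by the multinomial theorem, `C_L` is the
sum of `multinomial(k) · ∏_σ (sign σ)^{k_σ}` over all ways `k` of writing `L` as a sum of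
permutation matrices. A permutation used by such a `k` must avoid the zero entries of `L`; for
`L_n(a,b)` this forces it to fix every index `≥ 3`, so `k` comes from weights on `S_3`. There the
nine entry equations have exactly two solutions, `(ab-1)·id + a·(0 1) + (0 2) + b·(1 2)` and
`ab·id + (a-1)·(0 1) + (b-1)·(1 2) + (0 1 2) + (0 2 1)`, which give the two terms. -/

open MvPolynomial Finset Equiv

section
variable {ι : Type*} [Fintype ι] [DecidableEq ι]

def permCombination (k : Perm ι → ℕ) : Matrix ι ι ℕ :=
  fun i j => ∑ σ with σ j = i, k σ

lemma sum_permCombination_apply (k : Perm ι → ℕ) (j : ι) :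
    ∑ i, permCombination k i j = ∑ σ, k σ :=
  sum_fiberwise univ (fun σ : Perm ι => σ j) k

lemma apply_ne_zero_of_permCombination_eq {k : Perm ι → ℕ} {L : Matrix ι ι ℕ}
    (hk : permCombination k = L) {σ : Perm ι} (hσ : k σ ≠ 0) (j : ι) : L (σ j) j ≠ 0 := by
  rw [← hk, permCombination]
  exact (sum_pos' (fun _ _ => Nat.zero_le _) ⟨σ, by simp, Nat.pos_of_ne_zero hσ⟩).ne'

noncomputable def permExponent (σ : Perm ι) : ι × ι →₀ ℕ :=
  ∑ j, Finsupp.single (σ j, j) 1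

lemma permExponent_apply (σ : Perm ι) (i j : ι) :
    permExponent σ (i, j) = if σ j = i then 1 else 0 := by
  rw [permExponent, Finsupp.finsetSum_apply, sum_eq_single j]
  · simp [Finsupp.single_apply]
  · intro x _ hx
    simp [hx]
  · simp

lemma sum_smul_permExponent_eq_iff (k : Perm ι → ℕ) (L : Matrix ι ι ℕ) :
    ∑ σ, k σ • permExponent σ = Finsupp.equivFunOnFinite.symm (fun p : ι × ι => L p.1 p.2)
      ↔ permCombination k = L := by
  have hk (i j : ι) : (∑ σ, k σ • permExponent σ) (i, j) = permCombination k i j := by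
    simp [Finsupp.finsetSum_apply, permExponent_apply, permCombination, sum_filter]
  rw [Finsupp.ext_iff, ← Matrix.ext_iff, Prod.forall]
  simp only [hk, Finsupp.coe_equivFunOnFinite_symm]

lemma MvPolynomial.prod_monomial {σ κ R : Type*} [CommSemiring R] (s : Finset κ)
    (d : κ → σ →₀ ℕ) (c : κ → R) :
    ∏ i ∈ s, monomial (d i) (c i) = monomial (∑ i ∈ s, d i) (∏ i ∈ s, c i) :=
  AddMonoidAlgebra.prod_single s d c

variable {R : Type*} [CommRing R]

lemma det_X_eq_sum_monomial :
    (Matrix.of fun i j : ι => (X (i, j) : MvPolynomial (ι × ι) R)).det =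
      ∑ σ : Perm ι, monomial (permExponent σ) (Perm.sign σ : R) := by
  rw [Matrix.det_apply]
  refine sum_congr rfl fun σ _ => ?_
  rw [permExponent, monomial_sum_index, Units.smul_def, zsmul_eq_mul]
  simp [X]

lemma coeff_det_X_pow (L : Matrix ι ι ℕ) (m : ℕ) :
    coeff (Finsupp.equivFunOnFinite.symm fun p : ι × ι => L p.1 p.2)
      ((Matrix.of fun i j : ι => (X (i, j) : MvPolynomial (ι × ι) R)).det ^ m) =
      ∑ k ∈ piAntidiag univ m with permCombination k = L,
        (Nat.multinomial univ k : R) * ∏ σ, (Perm.sign σ : R) ^ k σ := by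
  rw [det_X_eq_sum_monomial, sum_pow_eq_sum_piAntidiag, coeff_sum, sum_filter]
  refine sum_congr rfl fun k _ => ?_
  rw [prod_congr rfl fun σ _ => monomial_pow .., prod_monomial, ← map_natCast C,
    C_mul_monomial, coeff_monomial]
  exact if_congr (sum_smul_permExponent_eq_iff k L) rfl rfl

end

lemma Nat.cast_multinomial {α F : Type*} [Field F] [CharZero F] (s : Finset α) (f : α → ℕ) :
    (Nat.multinomial s f : F) =
      (∑ i ∈ s, f i).factorial / ∏ i ∈ s, ((f i).factorial : F) := by
  rw [eq_div_iff (prod_ne_zero_iff.mpr fun i _ => Nat.cast_ne_zero.mpr (Nat.factorial_ne_zero _)),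
    mul_comm]
  exact_mod_cast Nat.multinomial_spec s f

section ExtendCounts
variable {α β : Type*} {p : β → Prop} [DecidablePred p] (f : α ≃ Subtype p)

lemma Equiv.Perm.exists_extendDomain_eq {τ : Perm β} (hτ : ∀ b, ¬p b → τ b = b) :
    ∃ σ : Perm α, σ.extendDomain f = τ := by
  have hp : ∀ b, p (τ b) ↔ p b := fun b => by
    by_cases hb : p b
    · refine iff_of_true (by_contra fun h => ?_) hb
      have := τ.injective (hτ _ h)
      exact h (by rwa [this])
    · rw [hτ b hb]
  refine ⟨f.symm.permCongr (τ.subtypePerm hp), Equiv.ext fun b => ?_⟩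
  by_cases hb : p b
  · simp [Perm.extendDomain_apply_subtype _ _ hb, Equiv.permCongr_apply]
  · rw [Perm.extendDomain_apply_not_subtype _ _ hb, hτ b hb]

lemma Equiv.Perm.extendDomain_injective :
    Function.Injective fun σ : Perm α => σ.extendDomain f :=
  Perm.extendDomainHom_injective f

noncomputable def extendCounts (K : Perm α → ℕ) : Perm β → ℕ :=
  Function.extend (fun σ : Perm α => σ.extendDomain f) K 0

lemma extendCounts_extendDomain (K : Perm α → ℕ) (σ : Perm α) :
    extendCounts f K (σ.extendDomain f) = K σ :=
  (Perm.extendDomain_injective f).extend_apply K 0 σ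

lemma extendCounts_injective : Function.Injective (extendCounts (β := β) f) := fun K K' h =>
  funext fun σ => by simpa only [extendCounts_extendDomain] using congrFun h (σ.extendDomain f)

lemma eq_extendCounts_of_fixes (k : Perm β → ℕ)
    (hk : ∀ τ, k τ ≠ 0 → ∀ b, ¬p b → τ b = b) :
    k = extendCounts f (fun σ => k (σ.extendDomain f)) := by
  funext τ
  by_cases hτ : ∃ σ : Perm α, σ.extendDomain f = τ
  · obtain ⟨σ, rfl⟩ := hτ
    rw [extendCounts_extendDomain]
  · rw [extendCounts, Function.extend_apply' _ _ _ hτ, Pi.zero_apply]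
    by_contra h
    exact hτ (Perm.exists_extendDomain_eq f (hk τ h))

variable [Fintype α] [DecidableEq α] [Fintype β] [DecidableEq β]

@[to_additive]
lemma prod_comp_extendCounts {M : Type*} [CommMonoid M] (K : Perm α → ℕ)
    (g : Perm β → ℕ → M) (hg : ∀ τ, g τ 0 = 1) :
    ∏ τ, g τ (extendCounts f K τ) = ∏ σ, g (σ.extendDomain f) (K σ) := by
  refine (Fintype.prod_of_injective _ (Perm.extendDomain_injective f) _ _
    (fun τ hτ => ?_) (fun σ => by rw [extendCounts_extendDomain])).symm
  rw [extendCounts, Function.extend_apply' _ _ _ (by simpa using hτ), Pi.zero_apply, hg]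

lemma sum_extendCounts (K : Perm α → ℕ) : ∑ τ, extendCounts f K τ = ∑ σ, K σ :=
  sum_comp_extendCounts f K (fun _ n => n) fun _ => rfl

lemma multinomial_extendCounts (K : Perm α → ℕ) :
    Nat.multinomial univ (extendCounts f K) = Nat.multinomial univ K := by
  rw [Nat.multinomial, Nat.multinomial, sum_extendCounts,
    prod_comp_extendCounts f K (fun _ n => n.factorial) fun _ => rfl]

lemma prod_sign_pow_extendCounts {R : Type*} [CommRing R] (K : Perm α → ℕ) :
    ∏ τ, (Perm.sign τ : R) ^ extendCounts f K τ = ∏ σ, (Perm.sign σ : R) ^ K σ := by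
  rw [prod_comp_extendCounts f K _ fun _ => pow_zero _]
  simp only [Perm.sign_extendDomain]

lemma permCombination_extendCounts (K : Perm α → ℕ) (i j : β) :
    permCombination (extendCounts f K) i j = ∑ σ with σ.extendDomain f j = i, K σ := by
  rw [permCombination, sum_filter, sum_filter]
  exact sum_comp_extendCounts f K (fun τ n => if τ j = i then n else 0) fun _ => by simp

lemma permCombination_extendCounts_of_mem (K : Perm α → ℕ) {i j : β} (hi : p i) (hj : p j) :
    permCombination (extendCounts f K) i j =
      permCombination K (f.symm ⟨i, hi⟩) (f.symm ⟨j, hj⟩) := by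
  rw [permCombination_extendCounts, permCombination]
  refine sum_congr (filter_congr fun σ _ => ?_) fun _ _ => rfl
  rw [Perm.extendDomain_apply_subtype _ _ hj, Equiv.eq_symm_apply, Subtype.ext_iff]

lemma permCombination_extendCounts_of_not_mem (K : Perm α → ℕ) {i j : β}
    (h : ¬(p i ∧ p j)) :
    permCombination (extendCounts f K) i j = if i = j then ∑ σ, K σ else 0 := by
  rw [permCombination_extendCounts]
  by_cases hj : p j
  · have hi : ¬p i := fun hi => h ⟨hi, hj⟩
    rw [if_neg (fun hij : i = j => hi (hij ▸ hj)), sum_eq_zero]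
    intro σ hσ
    rw [mem_filter, Perm.extendDomain_apply_subtype _ _ hj] at hσ
    exact absurd (hσ.2 ▸ Subtype.prop _) hi
  · simp_rw [Perm.extendDomain_apply_not_subtype _ _ hj, eq_comm (a := j)]
    rw [sum_filter, sum_ite_irrel, sum_const_zero]

end ExtendCounts

section PermFinThree

lemma univ_perm_fin_three : (univ : Finset (Perm (Fin 3))) =
    {1, swap 0 1, swap 0 2, swap 1 2, swap 0 1 * swap 1 2, swap 1 2 * swap 0 1} := by
  decide

lemma perm_fin_three_cases (σ : Perm (Fin 3)) : σ = 1 ∨ σ = swap 0 1 ∨ σ = swap 0 2 ∨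
    σ = swap 1 2 ∨ σ = swap 0 1 * swap 1 2 ∨ σ = swap 1 2 * swap 0 1 := by
  simpa [univ_perm_fin_three] using mem_univ σ

@[to_additive]
lemma prod_perm_fin_three {M : Type*} [CommMonoid M] (f : Perm (Fin 3) → M) :
    ∏ σ, f σ = f 1 * f (swap 0 1) * f (swap 0 2) * f (swap 1 2) * f (swap 0 1 * swap 1 2) *
      f (swap 1 2 * swap 0 1) := by
  rw [univ_perm_fin_three, prod_insert (by decide), prod_insert (by decide),
    prod_insert (by decide), prod_insert (by decide), prod_insert (by decide), prod_singleton]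
  simp only [mul_assoc]

def transpCounts (a b : ℕ) (σ : Perm (Fin 3)) : ℕ :=
  if σ = 1 then a * b - 1 else if σ = swap 0 1 then a else if σ = swap 0 2 then 1
  else if σ = swap 1 2 then b else 0

def cycleCounts (a b : ℕ) (σ : Perm (Fin 3)) : ℕ :=
  if σ = 1 then a * b else if σ = swap 0 1 then a - 1 else if σ = swap 1 2 then b - 1
  else if σ = swap 0 1 * swap 1 2 then 1 else if σ = swap 1 2 * swap 0 1 then 1 else 0

lemma transpCounts_ne_cycleCounts (a b : ℕ) : transpCounts a b ≠ cycleCounts a b := fun h => by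
  simpa +decide [transpCounts, cycleCounts] using congrFun h (swap 0 2)

variable {a b : ℕ}

lemma permCombination_eq_L3_iff (ha : 1 ≤ a) (hb : 1 ≤ b) (K : Perm (Fin 3) → ℕ) :
    permCombination K = L3 a b ↔ K = transpCounts a b ∨ K = cycleCounts a b := by
  have hab := Nat.mul_pos ha hb
  constructor
  · intro h
    have e : ∀ i j, permCombination K i j = L3 a b i j := fun i j => by rw [h]
    simp only [permCombination, sum_filter, sum_perm_fin_three] at e
    have e00 := e 0 0; have e10 := e 1 0; have e20 := e 2 0; have e01 := e 0 1
    have e11 := e 1 1; have e21 := e 2 1; have e02 := e 0 2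
    simp +decide [L3] at e00 e10 e20 e01 e11 e21 e02
    have : (K 1 = a * b - 1 ∧ K (swap 0 1) = a ∧ K (swap 0 2) = 1 ∧ K (swap 1 2) = b ∧
        K (swap 0 1 * swap 1 2) = 0 ∧ K (swap 1 2 * swap 0 1) = 0) ∨
      (K 1 = a * b ∧ K (swap 0 1) = a - 1 ∧ K (swap 0 2) = 0 ∧ K (swap 1 2) = b - 1 ∧
        K (swap 0 1 * swap 1 2) = 1 ∧ K (swap 1 2 * swap 0 1) = 1) := by omega
    rcases this with h | h <;> [left; right] <;> funext σ <;>
      rcases perm_fin_three_cases σ with rfl | rfl | rfl | rfl | rfl | rfl <;>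
      simp +decide [transpCounts, cycleCounts, h]
  · rintro (rfl | rfl) <;> ext i j <;> fin_cases i <;> fin_cases j <;>
      simp +decide [permCombination, sum_filter, sum_perm_fin_three, transpCounts, cycleCounts,
        L3] <;> omega

lemma sum_eq_of_permCombination_eq_L3 (ha : 1 ≤ a) (hb : 1 ≤ b) {K : Perm (Fin 3) → ℕ}
    (h : permCombination K = L3 a b) :
    ∑ σ, K σ = a * b + a + b := by
  have hab := Nat.mul_pos ha hb
  rw [← sum_permCombination_apply K 0, h]
  simp only [L3, Fin.isValue, Matrix.of_apply, Matrix.cons_val', Matrix.cons_val_zero,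
    Matrix.cons_val_fin_one, Fin.sum_univ_three, Matrix.cons_val_one, Matrix.cons_val]
  omega

lemma multinomial_mul_prod_sign_transpCounts (ha : 1 ≤ a) (hb : 1 ≤ b) :
    (((Nat.multinomial univ (transpCounts a b) : ℤ) *
      ∏ σ, (Perm.sign σ : ℤ) ^ transpCounts a b σ : ℤ) : ℚ) =
      (-1) ^ (a + b + 1) * (a * b + a + b).factorial /
        ((a * b - 1).factorial * a.factorial * b.factorial) := by
  have hab := Nat.mul_pos ha hb
  push_cast
  rw [Nat.cast_multinomial, sum_perm_fin_three, prod_perm_fin_three, prod_perm_fin_three]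
  simp +decide [transpCounts, show a * b - 1 + a + 1 + b = a * b + a + b by omega]
  ring

lemma multinomial_mul_prod_sign_cycleCounts (ha : 1 ≤ a) (hb : 1 ≤ b) :
    (((Nat.multinomial univ (cycleCounts a b) : ℤ) *
      ∏ σ, (Perm.sign σ : ℤ) ^ cycleCounts a b σ : ℤ) : ℚ) =
      (-1) ^ (a + b) * (a * b + a + b).factorial /
        ((a * b).factorial * (a - 1).factorial * (b - 1).factorial) := by
  obtain ⟨a, rfl⟩ := Nat.exists_eq_add_of_le' ha
  obtain ⟨b, rfl⟩ := Nat.exists_eq_add_of_le' hb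
  push_cast
  rw [Nat.cast_multinomial, sum_perm_fin_three, prod_perm_fin_three, prod_perm_fin_three]
  simp +decide [cycleCounts]
  rw [show (a + 1) * (b + 1) + a + b + 1 + 1 = (a + 1) * (b + 1) + (a + 1) + (b + 1) by ring]
  ring

end PermFinThree

section Lmat
variable {n a b : ℕ}

lemma Lmat_of_lt {i j : Fin n} (hi : (i : ℕ) < 3) (hj : (j : ℕ) < 3) :
    Lmat n a b i j = L3 a b ⟨i, hi⟩ ⟨j, hj⟩ := dif_pos ⟨hi, hj⟩

lemma Lmat_of_not_lt {i j : Fin n} (h : ¬((i : ℕ) < 3 ∧ (j : ℕ) < 3)) :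
    Lmat n a b i j = if i = j then a * b + a + b else 0 := dif_neg h

lemma fixes_of_Lmat_ne_zero {τ : Perm (Fin n)} (hτ : ∀ j, Lmat n a b (τ j) j ≠ 0) (j : Fin n)
    (hj : ¬(j : ℕ) < 3) : τ j = j := by
  by_contra h
  exact hτ j (by rw [Lmat_of_not_lt fun h' => hj h'.2, if_neg h])

variable (hn : 3 ≤ n)

lemma permCombination_extendCounts_eq_Lmat_iff (ha : 1 ≤ a) (hb : 1 ≤ b)
    (K : Perm (Fin 3) → ℕ) :
    permCombination (extendCounts (Fin.castLEquiv hn) K) = Lmat n a b ↔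
      permCombination K = L3 a b := by
  constructor
  · intro h
    ext x y
    have := congrFun₂ h (Fin.castLE hn x) (Fin.castLE hn y)
    rwa [permCombination_extendCounts_of_mem _ _ (by simp) (by simp),
      Lmat_of_lt (by simp) (by simp)] at this
  · intro h
    ext i j
    by_cases hij : (i : ℕ) < 3 ∧ (j : ℕ) < 3
    · rw [permCombination_extendCounts_of_mem (Fin.castLEquiv hn) K hij.1 hij.2,
        Lmat_of_lt hij.1 hij.2, h]
      rfl
    · rw [permCombination_extendCounts_of_not_mem (Fin.castLEquiv hn) K hij, Lmat_of_not_lt hij,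
        sum_eq_of_permCombination_eq_L3 ha hb h]

lemma permCombination_eq_Lmat_iff (ha : 1 ≤ a) (hb : 1 ≤ b) (k : Perm (Fin n) → ℕ) :
    permCombination k = Lmat n a b ↔ k = extendCounts (Fin.castLEquiv hn) (transpCounts a b) ∨
      k = extendCounts (Fin.castLEquiv hn) (cycleCounts a b) := by
  constructor
  · intro h
    have hk := eq_extendCounts_of_fixes (Fin.castLEquiv hn) k fun τ hτ =>
      fixes_of_Lmat_ne_zero (apply_ne_zero_of_permCombination_eq h hτ)
    rw [hk] at h ⊢
    exact ((permCombination_eq_L3_iff ha hb _).1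
      ((permCombination_extendCounts_eq_Lmat_iff hn ha hb _).1 h)).imp (congrArg _) (congrArg _)
  · rintro (rfl | rfl) <;>
      exact (permCombination_extendCounts_eq_Lmat_iff hn ha hb _).2
        ((permCombination_eq_L3_iff ha hb _).2 (by simp))

lemma filter_permCombination_eq_Lmat (ha : 1 ≤ a) (hb : 1 ≤ b) :
    {k ∈ piAntidiag (univ : Finset (Perm (Fin n))) (a * b + a + b) |
        permCombination k = Lmat n a b} =
      {extendCounts (Fin.castLEquiv hn) (transpCounts a b),
        extendCounts (Fin.castLEquiv hn) (cycleCounts a b)} := by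
  ext k
  simp only [mem_filter, mem_piAntidiag, mem_univ, implies_true, and_true, mem_insert,
    mem_singleton]
  rw [← permCombination_eq_Lmat_iff hn ha hb]
  refine ⟨And.right, fun h => ⟨?_, h⟩⟩
  rcases (permCombination_eq_Lmat_iff hn ha hb k).1 h with rfl | rfl <;>
    rw [sum_extendCounts] <;>
    exact sum_eq_of_permCombination_eq_L3 ha hb ((permCombination_eq_L3_iff ha hb _).2 (by simp))

end Lmat

theorem coeff_Lmat_eq_diff_of_multinomials (n a b : ℕ) (hn : 3 ≤ n)
    (ha : 1 ≤ a) (hb : 1 ≤ b) (m : ℕ) (hm : m = (a + 1) * (b + 1) - 1) :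
    (coeffC n m (Lmat n a b) : ℚ)
      = (-1) ^ (a + b + 1) *
          (m.factorial : ℚ) /
            ((a * b - 1).factorial * (Nat.factorial 0) * (Nat.factorial 0) *
              a.factorial * b.factorial * (Nat.factorial 1))
        + (-1) ^ (a + b) *
          (m.factorial : ℚ) /
            ((a * b).factorial * (Nat.factorial 1) * (Nat.factorial 1) *
              (a - 1).factorial * (b - 1).factorial * (Nat.factorial 0)) := by
  obtain rfl : m = a * b + a + b := by rw [hm]; ring_nf; omega
  rw [coeffC, coeff_det_X_pow, filter_permCombination_eq_Lmat hn ha hb,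
    sum_pair ((extendCounts_injective _).ne (transpCounts_ne_cycleCounts a b)),
    multinomial_extendCounts, multinomial_extendCounts, prod_sign_pow_extendCounts,
    prod_sign_pow_extendCounts]
  simp only [Int.cast_id]
  rw [Int.cast_add, multinomial_mul_prod_sign_transpCounts ha hb,
    multinomial_mul_prod_sign_cycleCounts ha hb]
  simp only [Nat.factorial_zero, Nat.factorial_one, Nat.cast_one, mul_one]
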